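/- Let B = {b_1, ..., b_{N+1}} be a multiset of vectors in Z^2 whose sum is zero. For a vector v in R^2 not parallel to any b_i, define d_{B,v} to be the sum of |det(b_i, b_j)| over all pairs i < j such that v lies in the cone generated by b_i and b_j. Then d_{B,v} is independent of the choice of v: for any two such vectors v and v', d_{B,v} = d_{B,v'}. -/

import Mathlib

open scoped Classical

noncomputable section

/-- Coerce an integer vector in `ℤ × ℤ` to `ℝ × ℝ`. -/
def toR (x : ℤ × ℤ) : ℝ × ℝ := ((x.1 : ℝ), (x.2 : ℝ))

/-- The determinant of the 2×2 matrix with columns `x` and `y`. -/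
def det2 (x y : ℝ × ℝ) : ℝ := x.1 * y.2 - x.2 * y.1

/-- `v` lies in the cone generated by `x` and `y`. -/
def inCone (x y v : ℝ × ℝ) : Prop := ∃ s t : ℝ, 0 ≤ s ∧ 0 ≤ t ∧ v = s • x + t • y

/-- `d_{B,v}`: the sum of `|det(b_i,b_j)|` over pairs `i < j` whose cone contains `v`. -/
def dSum (N : ℕ) (b : Fin (N + 1) → ℤ × ℤ) (v : ℝ × ℝ) : ℝ :=
  ∑ p : Fin (N + 1) × Fin (N + 1),
    if p.1 < p.2 ∧ inCone (toR (b p.1)) (toR (b p.2)) v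
    then |det2 (toR (b p.1)) (toR (b p.2))| else 0

/-! Write `σ_v(z) = sign det(z, v)`. For generic `v`, the term of the pair `(x, y)` in `d_{B,v}` is
`(1 - σ_v(x) σ_v(y)) (|det(x,y)| + σ_v(x) det(x,y)) / 4`. For two generic vectors `v, v'` the
Plücker relation turns the difference of these terms into `(w(x) - w(y)) det(x,y) / 4`, with a
weight `w` depending on one vector only. Summed over the pairs, it becomes
`Σ_i w(b_i) det(b_i, Σ_j b_j) / 4 = 0`. -/

open Finset SignType

lemma sign_mul_self_of_ne_zero {a : ℝ} (ha : a ≠ 0) : (sign a : ℝ) * sign a = 1 := by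
  rcases ha.lt_or_gt with h | h <;> simp [sign_neg, sign_pos, h]

lemma sign_eq_of_mul_pos {a b : ℝ} (h : 0 < a * b) : (sign b : ℝ) = sign a := by
  rcases pos_and_pos_or_neg_and_neg_of_mul_pos h with ⟨ha, hb⟩ | ⟨ha, hb⟩ <;>
    simp [sign_neg, sign_pos, ha, hb]

lemma sign_eq_neg_of_mul_neg {a b : ℝ} (h : a * b < 0) : (sign b : ℝ) = -sign a := by
  rcases mul_neg_iff.1 h with ⟨ha, hb⟩ | ⟨ha, hb⟩ <;> simp [sign_neg, sign_pos, ha, hb]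

-- In the application `h` is the Plücker relation `det(x,y) det(v,v') = det(x,v) det(y,v') -
-- det(x,v') det(y,v)`, and `a a' > 0 > b b'` says that the line `ℝ y` separates `v` from `v'`
-- while `ℝ x` does not.
lemma sign_mul_sign_mul_abs_of_mul_pos_of_mul_neg {a b a' b' d e : ℝ}
    (h : d * e = a * b' - a' * b) (ha : 0 < a * a') (hb : b * b' < 0) :
    (sign a * sign b * |d| : ℝ) = -(sign e * d) := by
  have hneg : a * b * (d * e) < 0 := by
    have hb0 : b ≠ 0 := by rintro rfl; simp at hb
    rw [h]
    nlinarith [mul_nonpos_of_nonneg_of_nonpos (sq_nonneg a) hb.le,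
      mul_pos ha (sq_pos_of_ne_zero hb0)]
  have he : e ≠ 0 := by rintro rfl; simp at hneg
  have hsign : (sign a * sign b * (sign d * sign e) : ℝ) = -1 := by
    simpa [sign_mul] using congrArg (fun s : SignType => (s : ℝ)) (sign_neg hneg)
  rw [← sign_mul_self d]
  linear_combination (d * sign e) * hsign - (d * sign a * sign b * sign d) *
    sign_mul_self_of_ne_zero he

lemma det2_comm (x y : ℝ × ℝ) : det2 y x = -det2 x y := by
  unfold det2; ring

lemma det2_sum_right {ι : Type*} (s : Finset ι) (x : ℝ × ℝ) (f : ι → ℝ × ℝ) :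
    det2 x (∑ i ∈ s, f i) = ∑ i ∈ s, det2 x (f i) := by
  simp only [det2, Prod.fst_sum, Prod.snd_sum, mul_sum, sum_sub_distrib]

lemma det2_mul_det2_eq (x y v v' : ℝ × ℝ) :
    det2 x y * det2 v v' = det2 x v * det2 y v' - det2 x v' * det2 y v := by
  unfold det2; ring

lemma toR_sum {ι : Type*} (s : Finset ι) (f : ι → ℤ × ℤ) :
    toR (∑ i ∈ s, f i) = ∑ i ∈ s, toR (f i) := by
  ext <;> simp [toR, Prod.fst_sum, Prod.snd_sum]

lemma eq_smul_add_smul_of_det2_ne_zero {x y : ℝ × ℝ} (hd : det2 x y ≠ 0) (v : ℝ × ℝ) :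
    v = (det2 v y / det2 x y) • x + (det2 x v / det2 x y) • y := by
  have h : det2 x y • v = det2 v y • x + det2 x v • y := by
    ext <;> simp only [det2, Prod.fst_add, Prod.snd_add, Prod.smul_fst, Prod.smul_snd,
      smul_eq_mul] <;> ring
  calc v = (det2 x y)⁻¹ • (det2 x y • v) := by rw [smul_smul, inv_mul_cancel₀ hd, one_smul]
    _ = _ := by rw [h, smul_add, smul_smul, smul_smul, inv_mul_eq_div, inv_mul_eq_div]

lemma inCone_iff {x y v : ℝ × ℝ} (hd : det2 x y ≠ 0) :
    inCone x y v ↔ 0 ≤ det2 x v * det2 x y ∧ det2 y v * det2 x y ≤ 0 := by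
  constructor
  · rintro ⟨s, t, hs, ht, rfl⟩
    have hx : det2 x (s • x + t • y) = t * det2 x y := by
      simp only [det2, Prod.fst_add, Prod.snd_add, Prod.smul_fst, Prod.smul_snd, smul_eq_mul]; ring
    have hy : det2 y (s • x + t • y) = -(s * det2 x y) := by
      simp only [det2, Prod.fst_add, Prod.snd_add, Prod.smul_fst, Prod.smul_snd, smul_eq_mul]; ring
    rw [hx, hy]
    constructor <;> nlinarith [sq_nonneg (det2 x y)]
  · rintro ⟨hx, hy⟩
    refine ⟨_, _, ?_, ?_, eq_smul_add_smul_of_det2_ne_zero hd v⟩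
    · rw [det2_comm, div_nonneg_iff, ← mul_nonneg_iff, neg_mul]; linarith
    · rwa [div_nonneg_iff, ← mul_nonneg_iff]

lemma det2_ne_zero_of_forall_ne_smul {x y v : ℝ × ℝ} (hd : det2 x y ≠ 0)
    (hv : ∀ t : ℝ, v ≠ t • x) : det2 x v ≠ 0 := by
  intro h
  apply hv (det2 v y / det2 x y)
  conv_lhs => rw [eq_smul_add_smul_of_det2_ne_zero hd v]
  simp [h]

-- `±1` according to the side of the line `ℝ z` on which `v` lies, `0` on the line.
def side (z v : ℝ × ℝ) : ℝ := sign (det2 z v)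

lemma side_mul_self {z v : ℝ × ℝ} (h : det2 z v ≠ 0) : side z v * side z v = 1 :=
  sign_mul_self_of_ne_zero h

lemma ite_inCone_eq_side {x y v : ℝ × ℝ}
    (hx : ∀ t : ℝ, v ≠ t • x) (hy : ∀ t : ℝ, v ≠ t • y) :
    (if inCone x y v then |det2 x y| else 0)
      = (1 - side x v * side y v) * (|det2 x y| + side x v * det2 x y) / 4 := by
  by_cases hd : det2 x y = 0
  · simp [hd]
  have hA := det2_ne_zero_of_forall_ne_smul hd hx
  have hB := det2_ne_zero_of_forall_ne_smul (by rwa [det2_comm, neg_ne_zero]) hy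
  rw [if_congr (inCone_iff hd) rfl rfl, side, side]
  -- `v` lies in the cone iff `side x v = sign (det2 x y) = -side y v`: check all sign patterns.
  rcases hA.lt_or_gt with hA | hA <;> rcases hB.lt_or_gt with hB | hB <;>
    rcases (Ne.lt_or_gt hd) with hd | hd <;>
    simp [sign_neg, sign_pos, abs_of_neg, abs_of_pos, mul_nonneg_iff, mul_nonpos_iff, hA, hB, hd,
      hA.le, hB.le, hd.le, hA.not_ge, hB.not_ge, hd.not_ge] <;> ring

lemma side_mul_side_sub_mul_abs {x y v v' : ℝ × ℝ}
    (hxv : det2 x v ≠ 0) (hyv : det2 y v ≠ 0)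
    (hxv' : det2 x v' ≠ 0) (hyv' : det2 y v' ≠ 0) :
    (side x v * side y v - side x v' * side y v') * |det2 x y|
      = side v v' * (side y v * side y v' - side x v * side x v') * det2 x y := by
  have hx2 := sign_mul_self_of_ne_zero hxv
  have hy2 := sign_mul_self_of_ne_zero hyv
  unfold side
  set c : ℝ := sign (det2 v v') * det2 x y
  rcases (mul_ne_zero hxv hxv').lt_or_gt with hx | hx <;>
    rcases (mul_ne_zero hyv hyv').lt_or_gt with hy | hy
  · rw [sign_eq_neg_of_mul_neg hx, sign_eq_neg_of_mul_neg hy]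
    linear_combination c * (hy2 - hx2)
  · have := sign_mul_sign_mul_abs_of_mul_pos_of_mul_neg (det2_mul_det2_eq y x v v') hy hx
    rw [det2_comm x y, abs_neg] at this
    rw [sign_eq_neg_of_mul_neg hx, sign_eq_of_mul_pos hy]
    linear_combination 2 * this - c * (hy2 + hx2)
  · have := sign_mul_sign_mul_abs_of_mul_pos_of_mul_neg (det2_mul_det2_eq x y v v') hx hy
    rw [sign_eq_of_mul_pos hx, sign_eq_neg_of_mul_neg hy]
    linear_combination 2 * this + c * (hy2 + hx2)
  · rw [sign_eq_of_mul_pos hx, sign_eq_of_mul_pos hy]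
    linear_combination -c * (hy2 - hx2)

def crossingWeight (v v' z : ℝ × ℝ) : ℝ :=
  side z v - side z v' + side v v' * side z v * side z v'

lemma ite_inCone_sub_ite_inCone {x y v v' : ℝ × ℝ}
    (hxv : ∀ t : ℝ, v ≠ t • x) (hyv : ∀ t : ℝ, v ≠ t • y)
    (hxv' : ∀ t : ℝ, v' ≠ t • x) (hyv' : ∀ t : ℝ, v' ≠ t • y) :
    (if inCone x y v then |det2 x y| else 0) - (if inCone x y v' then |det2 x y| else 0)
      = (crossingWeight v v' x * det2 x y + crossingWeight v v' y * det2 y x) / 4 := by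
  by_cases hd : det2 x y = 0
  · simp [hd, det2_comm x y]
  have hd' : det2 y x ≠ 0 := by rwa [det2_comm, neg_ne_zero]
  have hA := det2_ne_zero_of_forall_ne_smul hd hxv
  have hA' := det2_ne_zero_of_forall_ne_smul hd hxv'
  have hB := det2_ne_zero_of_forall_ne_smul hd' hyv
  have hB' := det2_ne_zero_of_forall_ne_smul hd' hyv'
  have key := side_mul_side_sub_mul_abs hA hB hA' hB'
  rw [ite_inCone_eq_side hxv hyv, ite_inCone_eq_side hxv' hyv', det2_comm x y, crossingWeight,
    crossingWeight]
  linear_combination (-1 / 4 : ℝ) * key - (side y v * det2 x y / 4) * side_mul_self hA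
    + (side y v' * det2 x y / 4) * side_mul_self hA'

lemma sum_ite_lt_add_swap {ι M : Type*} [Fintype ι] [LinearOrder ι] [AddCommMonoid M]
    (h : ι → ι → M) (hdiag : ∀ i, h i i = 0) :
    ∑ p : ι × ι, (if p.1 < p.2 then h p.1 p.2 + h p.2 p.1 else 0) = ∑ i, ∑ j, h i j := by
  have hswap : ∑ p : ι × ι, (if p.1 < p.2 then h p.2 p.1 else 0)
      = ∑ p : ι × ι, (if p.2 < p.1 then h p.1 p.2 else 0) :=
    Fintype.sum_equiv (Equiv.prodComm ι ι) _ _ fun _ => rfl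
  have hsplit : ∀ p : ι × ι,
      (if p.1 < p.2 then h p.1 p.2 else 0) + (if p.2 < p.1 then h p.1 p.2 else 0) = h p.1 p.2 := by
    rintro ⟨i, j⟩
    rcases lt_trichotomy i j with hij | rfl | hij
    · simp [hij, hij.not_gt]
    · simp [hdiag]
    · simp [hij, hij.not_gt]
  rw [← Fintype.sum_prod_type', ← sum_congr rfl fun p _ => hsplit p]
  simp only [ite_add_zero, sum_add_distrib, hswap]

theorem dSum_independent_general (N : ℕ) (b : Fin (N + 1) → ℤ × ℤ)
    (hsum : ∑ i, b i = 0)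
    (v v' : ℝ × ℝ)
    (hv : ∀ i, ∀ t : ℝ, v ≠ t • toR (b i))
    (hv' : ∀ i, ∀ t : ℝ, v' ≠ t • toR (b i)) :
    dSum N b v = dSum N b v' := by
  set w := crossingWeight v v'
  have hsumR : ∑ i, toR (b i) = 0 := by rw [← toR_sum, hsum]; simp [toR]
  have hdiff : dSum N b v - dSum N b v'
      = ∑ i, ∑ j, w (toR (b i)) * det2 (toR (b i)) (toR (b j)) / 4 := by
    rw [dSum, dSum, ← sum_sub_distrib,
      ← sum_ite_lt_add_swap _ fun i => by simp [det2, mul_comm]]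
    refine sum_congr rfl fun p _ => ?_
    by_cases hp : p.1 < p.2
    · simp only [hp, true_and, if_true, ← add_div]
      exact ite_inCone_sub_ite_inCone (hv _) (hv _) (hv' _) (hv' _)
    · simp [hp]
  have hzero : ∑ i, ∑ j, w (toR (b i)) * det2 (toR (b i)) (toR (b j)) / 4 = 0 := by
    simp only [← sum_div, ← mul_sum, ← det2_sum_right, hsumR]
    simp [det2]
  linarith

/-- The sum `d_{B,v}` is independent of the choice of the generic vector `v`. -/
theorem dSum_independent (N : ℕ) (b : Fin (N + 1) → ℤ × ℤ)
    (hsum : ∑ i, b i = 0)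
    (hspan : Submodule.span ℝ (Set.range fun i => toR (b i)) = ⊤)
    (v v' : ℝ × ℝ)
    (hv : ∀ i, ∀ t : ℝ, v ≠ t • toR (b i))
    (hv' : ∀ i, ∀ t : ℝ, v' ≠ t • toR (b i)) :
    dSum N b v = dSum N b v' :=
  dSum_independent_general N b hsum v v' hv hv'
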